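/- Let κ be a power of 2 and let C be a legal configuration for capacity κ all of whose items are powers of 2. Let u = 2^x ≤ κ for a non-negative integer x, and suppose the total slack Σ_{B ∈ C} slack(B) is at least u. Then there is a sequence of legal configurations for capacity κ starting at C and ending at some configuration C′, in which each pair of consecutive configurations is adjacent via moving an item of size strictly less than u, such that C′ contains a bunch with slack at least u. -/

import Mathlib

/-- A bunch is a multiset of items (item = positive integer, encoded as `ℕ`). -/
abbrev Bunch := Multiset ℕ

/-- A configuration is a multiset of bunches. -/
abbrev Config := Multiset Bunch

/-- The volume of a bunch is the sum of its items. -/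
def vol (B : Bunch) : ℕ := B.sum

/-- A configuration is legal for capacity `κ` if every bunch has volume at most `κ`. -/
def Legal (κ : ℕ) (C : Config) : Prop := ∀ B ∈ C, vol B ≤ κ

/-- The total slack of a configuration for capacity `κ`. -/
def slackSum (κ : ℕ) (C : Config) : ℕ := (C.map fun B => κ - vol B).sum

/-- `C'` is obtained from `C` by moving the single item `u` from a donor bunch `Bd`
to a (different occurrence of a) recipient bunch `Br`, respecting the capacity `κ`. -/
def AdjacentVia (κ u : ℕ) (C C' : Config) : Prop :=
  ∃ (rest : Config) (Bd Br : Bunch),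
    u ∈ Bd ∧ vol Br + u ≤ κ ∧
    C = Bd ::ₘ Br ::ₘ rest ∧ C' = Bd.erase u ::ₘ (u ::ₘ Br) ::ₘ rest

/-- Two configurations are adjacent if one is obtained from the other by moving a single item. -/
def Adjacent (κ : ℕ) (C C' : Config) : Prop := ∃ u, AdjacentVia κ u C C'

/-- One step of a reconfiguration sequence: both configurations are legal and adjacent. -/
def Step (κ : ℕ) (C C' : Config) : Prop := Legal κ C ∧ Legal κ C' ∧ Adjacent κ C C'

/-- `CS` is reconfigurable to `CT` for capacity `κ`: there is a sequence of legal
configurations for capacity `κ` from `CS` to `CT` with consecutive ones adjacent. -/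
def Reconfigurable (κ : ℕ) (CS CT : Config) : Prop :=
  Relation.ReflTransGen (Step κ) CS CT

/-!
Induction on `x`. Fix a bunch `T` of slack less than `2 ^ x`; it suffices to strictly increase some
bunch's slack beyond that of `T`, since the deficit to `2 ^ x` then decreases. If `2 ^ x` divides all
items of `T`, then it divides `slack T`, so `slack T = 0` and any bunch of positive slack does.
Otherwise let `2 ^ i` (`i < x`) be the smallest item of `T`. It divides `slack T`, hence also the
positive gap `2 ^ x - slack T`, so the other bunches have total slack at least `2 ^ i`. By induction
they can be rearranged, moving items smaller than `2 ^ i`, until one of them has room for `2 ^ i`;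
moving the item `2 ^ i` out of `T` into it increases the slack of `T`.
-/

open Relation

def MoveBelow (κ u : ℕ) (D D' : Config) : Prop :=
  Legal κ D ∧ Legal κ D' ∧ ∃ v < u, AdjacentVia κ v D D'

def HasRoom (κ u : ℕ) (C : Config) : Prop := ∃ B ∈ C, u ≤ κ - vol B

def PowTwoItems (C : Config) : Prop := ∀ a ∈ C.sum, ∃ j, a = 2 ^ j

@[simp]
theorem vol_cons (a : ℕ) (B : Bunch) : vol (a ::ₘ B) = a + vol B := Multiset.sum_cons a B

theorem vol_erase_add {a : ℕ} {B : Bunch} (h : a ∈ B) : vol (B.erase a) + a = vol B := by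
  rw [add_comm]
  exact Multiset.sum_erase h

@[simp]
theorem legal_cons {κ : ℕ} {B : Bunch} {C : Config} : Legal κ (B ::ₘ C) ↔ vol B ≤ κ ∧ Legal κ C :=
  Multiset.forall_mem_cons

@[simp]
theorem slackSum_cons (κ : ℕ) (B : Bunch) (C : Config) :
    slackSum κ (B ::ₘ C) = (κ - vol B) + slackSum κ C := by
  simp [slackSum]

theorem slackSum_eq_add_of_mem (κ : ℕ) {B : Bunch} {C : Config} (h : B ∈ C) :
    slackSum κ C = (κ - vol B) + slackSum κ (C.erase B) := by
  conv_lhs => rw [← Multiset.cons_erase h]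
  exact slackSum_cons κ B _

theorem exists_slack_pos_of_slackSum_pos {κ : ℕ} {C : Config} (h : 0 < slackSum κ C) :
    ∃ B ∈ C, 0 < κ - vol B := by
  by_contra! hC
  refine h.ne' (Multiset.sum_eq_zero fun s hs => ?_)
  obtain ⟨B, hB, rfl⟩ := Multiset.mem_map.mp hs
  exact Nat.le_zero.mp (hC B hB)

theorem dvd_slack {κ d : ℕ} {B : Bunch} (hκ : d ∣ κ) (hB : ∀ a ∈ B, d ∣ a) : d ∣ κ - vol B :=
  Nat.dvd_sub hκ (Multiset.dvd_sum hB)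

theorem PowTwoItems.of_mem {C : Config} (hC : PowTwoItems C) {B : Bunch} (hB : B ∈ C) :
    ∀ a ∈ B, ∃ j, a = 2 ^ j :=
  fun a ha => hC a (Multiset.mem_of_le (Multiset.le_sum_of_mem hB) ha)

theorem PowTwoItems.erase {C : Config} (hC : PowTwoItems C) (B : Bunch) :
    PowTwoItems (C.erase B) :=
  fun a ha => by
    by_cases hB : B ∈ C
    · exact hC a (Multiset.sum_erase hB ▸ Multiset.mem_add.mpr (.inr ha))
    · exact hC a (Multiset.erase_of_notMem hB ▸ ha)

/-- In a bunch of powers of two, the smallest item divides all the others. -/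
theorem exists_pow_two_dvd_items {T : Bunch} (hT : ∀ a ∈ T, ∃ j, a = 2 ^ j) (x : ℕ) :
    (∀ a ∈ T, 2 ^ x ∣ a) ∨ ∃ i < x, 2 ^ i ∈ T ∧ ∀ a ∈ T, 2 ^ i ∣ a := by
  refine or_iff_not_imp_left.mpr fun hx => ?_
  obtain ⟨b, hbT, hbx⟩ := not_forall₂.mp hx
  obtain ⟨m, hmT, hmin⟩ := Multiset.exists_min_image (s := T) id (by rintro rfl; simp at hbT)
  obtain ⟨i, rfl⟩ := hT m hmT
  have hdvd : ∀ a ∈ T, 2 ^ i ∣ a := fun a ha => by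
    obtain ⟨e, rfl⟩ := hT a ha
    exact Nat.pow_dvd_pow 2 ((Nat.pow_le_pow_iff_right (by norm_num)).mp (hmin _ ha))
  refine ⟨i, ?_, hmT, hdvd⟩
  by_contra! hxi
  exact hbx ((Nat.pow_dvd_pow 2 hxi).trans (hdvd b hbT))

theorem AdjacentVia.sum_eq {κ v : ℕ} {C C' : Config} (h : AdjacentVia κ v C C') :
    C'.sum = C.sum := by
  obtain ⟨rest, Bd, Br, hv, -, rfl, rfl⟩ := h
  conv_rhs => rw [← Multiset.cons_erase hv]
  simp only [Multiset.sum_cons, Multiset.cons_add, Multiset.add_cons]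

theorem AdjacentVia.legal {κ v : ℕ} {C C' : Config} (h : AdjacentVia κ v C C') (hC : Legal κ C) :
    Legal κ C' := by
  obtain ⟨rest, Bd, Br, hv, hfit, rfl, rfl⟩ := h
  simp only [legal_cons, vol_cons] at hC ⊢
  have := vol_erase_add hv
  exact ⟨by omega, by omega, hC.2.2⟩

theorem AdjacentVia.slackSum_eq {κ v : ℕ} {C C' : Config} (h : AdjacentVia κ v C C')
    (hC : Legal κ C) : slackSum κ C' = slackSum κ C := by
  obtain ⟨rest, Bd, Br, hv, hfit, rfl, rfl⟩ := h
  simp only [legal_cons] at hC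
  simp only [slackSum_cons, vol_cons]
  have := vol_erase_add hv
  omega

theorem AdjacentVia.cons {κ v : ℕ} {C C' : Config} (h : AdjacentVia κ v C C') (A : Bunch) :
    AdjacentVia κ v (A ::ₘ C) (A ::ₘ C') := by
  obtain ⟨rest, Bd, Br, hv, hfit, rfl, rfl⟩ := h
  exact ⟨A ::ₘ rest, Bd, Br, hv, hfit, by simp only [Multiset.cons_swap A],
    by simp only [Multiset.cons_swap A]⟩

namespace MoveBelow

variable {κ u : ℕ} {C C' : Config}

theorem mono {u' : ℕ} (hu : u ≤ u') (h : MoveBelow κ u C C') : MoveBelow κ u' C C' :=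
  let ⟨hC, hC', v, hv, hadj⟩ := h
  ⟨hC, hC', v, hv.trans_le hu, hadj⟩

theorem cons {A : Bunch} (hA : vol A ≤ κ) (h : MoveBelow κ u C C') :
    MoveBelow κ u (A ::ₘ C) (A ::ₘ C') :=
  let ⟨hC, hC', v, hv, hadj⟩ := h
  ⟨legal_cons.mpr ⟨hA, hC⟩, legal_cons.mpr ⟨hA, hC'⟩, v, hv, hadj.cons A⟩

theorem of_adjacentVia {v : ℕ} (hv : v < u) (hC : Legal κ C) (h : AdjacentVia κ v C C') :
    MoveBelow κ u C C' :=
  ⟨hC, h.legal hC, v, hv, h⟩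

end MoveBelow

namespace Relation.ReflTransGen

variable {κ u : ℕ} {C C' : Config}

theorem legal_moveBelow (h : ReflTransGen (MoveBelow κ u) C C') (hC : Legal κ C) : Legal κ C' := by
  induction h with
  | refl => exact hC
  | tail _ hstep _ => exact hstep.2.1

theorem sum_eq_of_moveBelow (h : ReflTransGen (MoveBelow κ u) C C') : C'.sum = C.sum := by
  induction h with
  | refl => rfl
  | tail _ hstep ih =>
    obtain ⟨-, -, v, -, hadj⟩ := hstep
    rw [hadj.sum_eq, ih]

theorem slackSum_eq_of_moveBelow (h : ReflTransGen (MoveBelow κ u) C C') :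
    slackSum κ C' = slackSum κ C := by
  induction h with
  | refl => rfl
  | tail _ hstep ih =>
    obtain ⟨hD, -, v, -, hadj⟩ := hstep
    rw [hadj.slackSum_eq hD, ih]

theorem powTwoItems_of_moveBelow (h : ReflTransGen (MoveBelow κ u) C C') (hC : PowTwoItems C) :
    PowTwoItems C' := by
  rw [PowTwoItems, sum_eq_of_moveBelow h]
  exact hC

theorem cons_moveBelow {A : Bunch} (hA : vol A ≤ κ) (h : ReflTransGen (MoveBelow κ u) C C') :
    ReflTransGen (MoveBelow κ u) (A ::ₘ C) (A ::ₘ C') :=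
  h.lift _ fun _ _ hstep => hstep.cons hA

end Relation.ReflTransGen

theorem exists_reachable_hasRoom_of_forall_slack_lt {κ u : ℕ} {P : Config → Prop}
    (hP : ∀ {C C'}, ReflTransGen (MoveBelow κ u) C C' → P C → P C')
    (step : ∀ C, P C → ∀ T ∈ C, κ - vol T < u →
      ∃ C', ReflTransGen (MoveBelow κ u) C C' ∧ ∃ B ∈ C', κ - vol T < κ - vol B)
    {C : Config} (hC : P C) {T : Bunch} (hT : T ∈ C) :
    ∃ C', ReflTransGen (MoveBelow κ u) C C' ∧ HasRoom κ u C' := by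
  induction hn : u - (κ - vol T) using Nat.strong_induction_on generalizing C T with
  | _ n ih =>
  by_cases hroom : u ≤ κ - vol T
  · exact ⟨C, .refl, T, hT, hroom⟩
  obtain ⟨C₁, h₁, B, hB, hlt⟩ := step C hC T hT (by omega)
  obtain ⟨C₂, h₂, hroom₂⟩ := ih _ (by omega) (hP h₁ hC) hB rfl
  exact ⟨C₂, h₁.trans h₂, hroom₂⟩

theorem exists_reachable_slack_gt {κ x : ℕ} (hκ : 2 ^ x ∣ κ)
    (ih : ∀ i < x, ∀ C, Legal κ C → PowTwoItems C → 2 ^ i ≤ slackSum κ C →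
      ∃ C', ReflTransGen (MoveBelow κ (2 ^ i)) C C' ∧ HasRoom κ (2 ^ i) C')
    {C : Config} (hC : Legal κ C) (hpow : PowTwoItems C) (hslack : 2 ^ x ≤ slackSum κ C)
    {T : Bunch} (hT : T ∈ C) (hTx : κ - vol T < 2 ^ x) :
    ∃ C', ReflTransGen (MoveBelow κ (2 ^ x)) C C' ∧ ∃ B ∈ C', κ - vol T < κ - vol B := by
  rcases exists_pow_two_dvd_items (hpow.of_mem hT) x with hdvd | ⟨i, hix, hiT, hdvd⟩
  · have hT0 : κ - vol T = 0 :=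
      Nat.eq_zero_of_dvd_of_lt (dvd_slack hκ hdvd) hTx
    obtain ⟨B, hB, hBpos⟩ :=
      exists_slack_pos_of_slackSum_pos (hslack.trans_lt' (Nat.two_pow_pos x))
    exact ⟨C, .refl, B, hB, hT0 ▸ hBpos⟩
  have hsplit := slackSum_eq_add_of_mem κ hT
  have hpow_i : 2 ^ i ∣ 2 ^ x := Nat.pow_dvd_pow 2 hix.le
  have hgap : 2 ^ i ≤ 2 ^ x - (κ - vol T) :=
    Nat.le_of_dvd (by omega) (Nat.dvd_sub hpow_i (dvd_slack (hpow_i.trans hκ) hdvd))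
  obtain ⟨rest', hreach, S, hS, hroom⟩ :=
    ih i hix (C.erase T) (fun B hB => hC B (Multiset.mem_of_mem_erase hB)) (hpow.erase T) (by omega)
  have hvolT : vol T ≤ κ := hC T hT
  have hreach' : ReflTransGen (MoveBelow κ (2 ^ x)) C (T ::ₘ S ::ₘ rest'.erase S) := by
    rw [← Multiset.cons_erase hT, Multiset.cons_erase hS]
    exact (ReflTransGen.mono (fun _ _ => MoveBelow.mono (Nat.le_of_dvd (Nat.two_pow_pos x) hpow_i))
      _ _ hreach).cons_moveBelow hvolT
  have hlegal : Legal κ (T ::ₘ S ::ₘ rest'.erase S) := hreach'.legal_moveBelow hC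
  have hmove : AdjacentVia κ (2 ^ i) (T ::ₘ S ::ₘ rest'.erase S)
      (T.erase (2 ^ i) ::ₘ (2 ^ i ::ₘ S) ::ₘ rest'.erase S) :=
    ⟨_, T, S, hiT, by omega, rfl, rfl⟩
  refine ⟨_, hreach'.tail (MoveBelow.of_adjacentVia (Nat.pow_lt_pow_right (by norm_num) hix)
    hlegal hmove), T.erase (2 ^ i), Multiset.mem_cons_self _ _, ?_⟩
  have := vol_erase_add hiT
  have := Nat.two_pow_pos i
  omega

theorem exists_reachable_hasRoom {κ : ℕ} (x : ℕ) (hκ : 2 ^ x ∣ κ) {C : Config} (hC : Legal κ C)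
    (hpow : PowTwoItems C) (hslack : 2 ^ x ≤ slackSum κ C) :
    ∃ C', ReflTransGen (MoveBelow κ (2 ^ x)) C C' ∧ HasRoom κ (2 ^ x) C' := by
  induction x using Nat.strong_induction_on generalizing C with
  | _ x ih =>
  obtain ⟨T, hT, -⟩ :=
    exists_slack_pos_of_slackSum_pos (hslack.trans_lt' (Nat.two_pow_pos x))
  refine exists_reachable_hasRoom_of_forall_slack_lt
    (P := fun D => Legal κ D ∧ PowTwoItems D ∧ 2 ^ x ≤ slackSum κ D)
    (fun h ⟨hD, hpowD, hslackD⟩ => ⟨h.legal_moveBelow hD, h.powTwoItems_of_moveBelow hpowD,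
      h.slackSum_eq_of_moveBelow ▸ hslackD⟩)
    (fun D ⟨hD, hpowD, hslackD⟩ _ => exists_reachable_slack_gt hκ
      (fun i hi D => ih i hi ((Nat.pow_dvd_pow 2 hi.le).trans hκ) (C := D)) hD hpowD hslackD)
    ⟨hC, hpow, hslack⟩ hT

theorem stmt8 (κ x : ℕ) (hκ : ∃ k, κ = 2 ^ k) (hu : 2 ^ x ≤ κ)
    (C : Config) (hC : Legal κ C)
    (hpow : ∀ a ∈ C.sum, ∃ j : ℕ, a = 2 ^ j)
    (hslack : 2 ^ x ≤ slackSum κ C) :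
    ∃ C' : Config,
      Relation.ReflTransGen
        (fun D D' => Legal κ D ∧ Legal κ D' ∧ ∃ v < 2 ^ x, AdjacentVia κ v D D') C C' ∧
      ∃ B ∈ C', 2 ^ x ≤ κ - vol B := by
  obtain ⟨k, rfl⟩ := hκ
  have hdvd : 2 ^ x ∣ 2 ^ k :=
    Nat.pow_dvd_pow 2 ((Nat.pow_le_pow_iff_right (by norm_num)).mp hu)
  exact exists_reachable_hasRoom x hdvd hC hpow hslack
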